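/- Let V be a finite-dimensional real inner product space, A : V → V a self-adjoint positive semidefinite linear operator, Λ > 0 with ⟨A v, v⟩ ≤ Λ ⟨v, v⟩ for all v ∈ V, and G = id − Λ⁻¹ A. Then for every m ∈ ℕ and every v ∈ V, ‖A (G^m v)‖² ≤ Λ (1 + 2m)⁻¹ ⟨A v, v⟩. -/

import Mathlib

open scoped RealInnerProductSpace
open Polynomial Module.End

/-!
Diagonalize `A` in an orthonormal eigenbasis. Then `A G^m` and `A` act on the `i`-th coordinate
by `μ (1 - μ/Λ)^m` and `μ`, where the eigenvalue `μ` lies in `[0, Λ]`, so the claim reduces to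
`x (1 - x)^(2m) ≤ 1/(2m + 1)` for `x = μ/Λ ∈ [0, 1]`. That follows from Bernoulli's inequality:
`(1 + 2m x)(1 - x)^(2m) ≤ (1 + x)^(2m) (1 - x)^(2m) = (1 - x²)^(2m) ≤ 1`.
-/

theorem mul_one_sub_pow_le_inv_add_one (n : ℕ) {x : ℝ} (hx₀ : 0 ≤ x) (hx₁ : x ≤ 1) :
    x * (1 - x) ^ n ≤ ((n : ℝ) + 1)⁻¹ := by
  rw [← one_mul (_ + 1)⁻¹, le_mul_inv_iff₀ (by positivity)]
  have hbernoulli : 1 + n * x ≤ (1 + x) ^ n := one_add_mul_le_pow (by linarith) n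
  calc x * (1 - x) ^ n * (n + 1) = ((n + 1) * x) * (1 - x) ^ n := by ring
    _ ≤ (1 + n * x) * (1 - x) ^ n := by gcongr; nlinarith
    _ ≤ (1 + x) ^ n * (1 - x) ^ n := by gcongr
    _ = (1 - x ^ 2) ^ n := by rw [← mul_pow]; ring
    _ ≤ 1 := pow_le_one₀ (by nlinarith) (by nlinarith)

theorem sq_mul_one_sub_inv_mul_pow_le (m : ℕ) {μ Λ : ℝ} (hμ₀ : 0 ≤ μ) (hμΛ : μ ≤ Λ) :
    (μ * (1 - Λ⁻¹ * μ) ^ m) ^ 2 ≤ Λ * (1 + 2 * (m : ℝ))⁻¹ * μ := by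
  obtain rfl | hΛ := (hμ₀.trans hμΛ).eq_or_lt
  · simp [le_antisymm hμΛ hμ₀]
  set x := Λ⁻¹ * μ
  have hμ : μ = Λ * x := (mul_inv_cancel_left₀ hΛ.ne' μ).symm
  have hx₁ : x ≤ 1 := (inv_mul_le_one₀ hΛ).mpr hμΛ
  have hpeak := mul_one_sub_pow_le_inv_add_one (2 * m) (by positivity) hx₁
  push_cast at hpeak
  calc (μ * (1 - x) ^ m) ^ 2 = Λ * μ * (x * (1 - x) ^ (2 * m)) := by
        rw [hμ]; ring
    _ ≤ Λ * μ * (1 + 2 * (m : ℝ))⁻¹ := by rw [add_comm 1]; gcongr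
    _ = Λ * (1 + 2 * (m : ℝ))⁻¹ * μ := by ring

theorem Module.End.HasEigenvalue.le_of_inner_le {V : Type*} [NormedAddCommGroup V]
    [InnerProductSpace ℝ V] {T : V →ₗ[ℝ] V} {μ Λ : ℝ} (hμ : HasEigenvalue T μ)
    (hΛ : ∀ v, ⟪T v, v⟫ ≤ Λ * ⟪v, v⟫) : μ ≤ Λ := by
  obtain ⟨v, hv, hv₀⟩ := hμ.exists_hasEigenvector
  have hpos : 0 < ⟪v, v⟫ := real_inner_self_pos.mpr hv₀
  have := hΛ v
  rw [mem_genEigenspace_one.mp hv, real_inner_smul_left] at this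
  exact le_of_mul_le_mul_right this hpos

namespace LinearMap.IsSymmetric

variable {V : Type*} [NormedAddCommGroup V] [InnerProductSpace ℝ V] [FiniteDimensional ℝ V]
  {T : V →ₗ[ℝ] V} {n : ℕ}

theorem eigenvectorBasis_repr_aeval_apply (hT : T.IsSymmetric) (hn : Module.finrank ℝ V = n)
    (p : ℝ[X]) (w : V) (i : Fin n) :
    (hT.eigenvectorBasis hn).repr (aeval T p w) i =
      p.eval (hT.eigenvalues hn i) * (hT.eigenvectorBasis hn).repr w i := by
  induction p using Polynomial.induction_on generalizing w with
  | C a => simp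
  | add p q hp hq => simp [hp, hq, add_mul]
  | monomial k a ih =>
    rw [pow_succ, ← mul_assoc, map_mul, Module.End.mul_apply, ih, aeval_X,
      hT.eigenvectorBasis_apply_self_apply]
    simp only [eval_mul, eval_X, RCLike.ofReal_real_eq_id, id_eq]
    ring

theorem norm_aeval_apply_sq_le_inner_aeval_apply (hT : T.IsSymmetric) {p q : ℝ[X]}
    (hpq : ∀ μ, HasEigenvalue T μ → p.eval μ ^ 2 ≤ q.eval μ) (w : V) :
    ‖aeval T p w‖ ^ 2 ≤ ⟪aeval T q w, w⟫ := by
  set b := hT.eigenvectorBasis rfl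
  rw [← b.sum_sq_inner_left, ← b.sum_inner_mul_inner]
  refine Finset.sum_le_sum fun i _ ↦ ?_
  simp only [real_inner_comm (b i), ← b.repr_apply_apply, b, hT.eigenvectorBasis_repr_aeval_apply]
  rw [mul_pow, mul_assoc, ← sq]
  exact mul_le_mul_of_nonneg_right (hpq _ (hT.hasEigenvalue_eigenvalues rfl i)) (sq_nonneg _)

end LinearMap.IsSymmetric

theorem richardson_smoothing_two_one_general
    {V : Type*} [NormedAddCommGroup V] [InnerProductSpace ℝ V] [FiniteDimensional ℝ V]
    (A : V →ₗ[ℝ] V) (hA : LinearMap.IsSymmetric A)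
    (hA_pos : ∀ v : V, 0 ≤ ⟪A v, v⟫)
    (Λ : ℝ) (hΛ_ub : ∀ v : V, ⟪A v, v⟫ ≤ Λ * ⟪v, v⟫)
    (G : V →ₗ[ℝ] V) (hG : G = LinearMap.id - Λ⁻¹ • A)
    (m : ℕ) (v : V) :
    ‖A ((G ^ m) v)‖ ^ 2 ≤ Λ * (1 + 2 * (m : ℝ))⁻¹ * ⟪A v, v⟫ := by
  have hspectrum : ∀ μ, HasEigenvalue A μ → 0 ≤ μ ∧ μ ≤ Λ := fun μ hμ ↦
    ⟨eigenvalue_nonneg_of_nonneg hμ fun v ↦ real_inner_comm (A v) v ▸ hA_pos v,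
      hμ.le_of_inner_le hΛ_ub⟩
  have hAGm : A * G ^ m = aeval A (X * (1 - C Λ⁻¹ * X) ^ m) := by
    simp [hG, Algebra.smul_def, Module.End.one_eq_id]
  calc ‖A ((G ^ m) v)‖ ^ 2 = ‖aeval A (X * (1 - C Λ⁻¹ * X) ^ m) v‖ ^ 2 := by
        rw [← hAGm, Module.End.mul_apply]
    _ ≤ ⟪aeval A (C (Λ * (1 + 2 * (m : ℝ))⁻¹) * X) v, v⟫ :=
        hA.norm_aeval_apply_sq_le_inner_aeval_apply (fun μ hμ ↦ by
          simpa using sq_mul_one_sub_inv_mul_pow_le m (hspectrum μ hμ).1 (hspectrum μ hμ).2) v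
    _ = Λ * (1 + 2 * (m : ℝ))⁻¹ * ⟪A v, v⟫ := by
        simp only [map_mul, aeval_C, aeval_X, Module.End.mul_apply, Module.algebraMap_end_apply,
          map_smul, real_inner_smul_left]
        ring

/-- Smoothing property (case `s = 2`, `t = 1`): if `A` is a self-adjoint positive semidefinite
operator on a finite-dimensional real inner product space, `Λ > 0` with
`⟪A v, v⟫ ≤ Λ ⟪v, v⟫` for all `v`, and `G = id - Λ⁻¹ • A`, then
`‖A (G^m v)‖² ≤ Λ (1 + 2m)⁻¹ ⟪A v, v⟫` for every `m` and `v`. -/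
theorem richardson_smoothing_two_one
    {V : Type*} [NormedAddCommGroup V] [InnerProductSpace ℝ V] [FiniteDimensional ℝ V]
    (A : V →ₗ[ℝ] V) (hA : LinearMap.IsSymmetric A)
    (hA_pos : ∀ v : V, 0 ≤ ⟪A v, v⟫)
    (Λ : ℝ) (hΛ : 0 < Λ) (hΛ_ub : ∀ v : V, ⟪A v, v⟫ ≤ Λ * ⟪v, v⟫)
    (G : V →ₗ[ℝ] V) (hG : G = LinearMap.id - Λ⁻¹ • A)
    (m : ℕ) (v : V) :
    ‖A ((G ^ m) v)‖ ^ 2 ≤ Λ * (1 + 2 * (m : ℝ))⁻¹ * ⟪A v, v⟫ :=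
  richardson_smoothing_two_one_general A hA hA_pos Λ hΛ_ub G hG m v
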